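/- For m ≥ 1 a positive integer, α > 2, and z ≥ 0, the Gauss hypergeometric value ₂F₁(m, −2/α, 1 − 2/α, −z) defined by the Euler integral equals (−2/α)·∫₀¹ t^{−2/α − 1}·( (1 + tz)^{−m} − 1 ) dt + 1, is ≥ 1, and is monotonically nondecreasing in both m and z. -/
import Mathlib


open Real MeasureTheory

/-- The Gauss hypergeometric value `₂F₁(m, -2/α, 1-2/α, -z)` via the (regularized)
Euler integral representation. -/
noncomputable def twoF1 (m : ℕ) (α z : ℝ) : ℝ :=
  (-2 / α) * (∫ t in Set.Ioc (0 : ℝ) 1,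
    t ^ (-2 / α - 1) * ((1 + t * z) ^ (-(m : ℝ)) - 1)) + 1

/-- Bernoulli-type bound: `1 - (1+y)^(-m) ≤ m y` for `y ≥ 0`. -/
lemma one_sub_rpow_neg_le (y : ℝ) (hy : 0 ≤ y) (m : ℕ) :
    1 - (1 + y) ^ (-(m : ℝ)) ≤ m * y := by
  have h1 : (0:ℝ) < 1 + y := by linarith
  rw [Real.rpow_neg h1.le, Real.rpow_natCast]
  have hp : (0:ℝ) < (1 + y) ^ m := pow_pos h1 m
  have key : (1 + y) ^ m - 1 ≤ m * y * (1 + y) ^ m := by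
    induction m with
    | zero => simp
    | succ n ih =>
      have hpn : (0:ℝ) < (1 + y) ^ n := pow_pos h1 n
      have ih' := ih hpn
      push_cast
      rw [pow_succ]
      nlinarith [ih', mul_nonneg hy hpn.le,
        mul_nonneg (mul_nonneg (Nat.cast_nonneg n : (0:ℝ) ≤ n) hy) hpn.le,
        mul_nonneg (mul_nonneg (mul_nonneg (Nat.cast_nonneg n : (0:ℝ) ≤ n) hy) hpn.le) hy,
        mul_nonneg (mul_nonneg hy hpn.le) hy]
  have heq : 1 - ((1 + y) ^ m)⁻¹ = ((1 + y) ^ m - 1) / (1 + y) ^ m := by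
    field_simp
  rw [heq, div_le_iff₀ hp]
  exact key

/-- The integrand is integrable on `(0,1]`. -/
lemma twoF1_integrable (m : ℕ) (α z : ℝ) (hα : 2 < α) (hz : 0 ≤ z) :
    IntegrableOn (fun t : ℝ => t ^ (-2 / α - 1) * ((1 + t * z) ^ (-(m : ℝ)) - 1))
      (Set.Ioc (0 : ℝ) 1) := by
  have hα0 : (0:ℝ) < α := by linarith
  have hexp : (-1 : ℝ) < -2 / α := by
    rw [neg_div, neg_lt_neg_iff, div_lt_one hα0]; linarith
  have hg : IntegrableOn (fun t : ℝ => m * z * t ^ (-2 / α)) (Set.Ioc (0 : ℝ) 1) := by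
    have h := intervalIntegral.intervalIntegrable_rpow' (a := 0) (b := 1) hexp
    rw [intervalIntegrable_iff, Set.uIoc_of_le (by norm_num : (0:ℝ) ≤ 1)] at h
    exact h.const_mul _
  have hmeas : AEStronglyMeasurable
      (fun t : ℝ => t ^ (-2 / α - 1) * ((1 + t * z) ^ (-(m : ℝ)) - 1))
      (volume.restrict (Set.Ioc (0 : ℝ) 1)) := by
    apply ContinuousOn.aestronglyMeasurable _ measurableSet_Ioc
    apply ContinuousOn.mul
    · exact fun t ht =>
        (Real.continuousAt_rpow_const t _ (Or.inl (ne_of_gt ht.1))).continuousWithinAt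
    · refine ContinuousOn.sub ?_ continuousOn_const
      intro t ht
      have h1 : (0:ℝ) < 1 + t * z := by
        have := mul_nonneg ht.1.le hz; linarith
      exact (((by fun_prop : Continuous fun t : ℝ => 1 + t * z).continuousAt.rpow_const
        (Or.inl (ne_of_gt h1)))).continuousWithinAt
  refine Integrable.mono hg hmeas ?_
  filter_upwards [ae_restrict_mem measurableSet_Ioc] with t ht
  have ht0 : 0 < t := ht.1
  have htz : 0 ≤ t * z := mul_nonneg ht0.le hz
  have h1 : (1:ℝ) ≤ 1 + t * z := by linarith
  have hr1 : (1 + t * z) ^ (-(m : ℝ)) ≤ 1 :=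
    Real.rpow_le_one_of_one_le_of_nonpos h1 (by simp [Nat.cast_nonneg])
  have hr0 : 0 < (1 + t * z) ^ (-(m : ℝ)) := Real.rpow_pos_of_pos (by linarith) _
  have htp : 0 < t ^ (-2 / α - 1) := Real.rpow_pos_of_pos ht0 _
  rw [Real.norm_eq_abs, Real.norm_eq_abs, abs_mul]
  have habs1 : |t ^ (-2 / α - 1)| = t ^ (-2 / α - 1) := abs_of_pos htp
  have habs2 : |(1 + t * z) ^ (-(m : ℝ)) - 1| = 1 - (1 + t * z) ^ (-(m : ℝ)) := by
    rw [abs_of_nonpos (by linarith), neg_sub]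
  rw [habs1, habs2]
  have hbern : 1 - (1 + t * z) ^ (-(m : ℝ)) ≤ m * (t * z) :=
    one_sub_rpow_neg_le (t * z) htz m
  have hmono : t ^ (-2 / α - 1) * (1 - (1 + t * z) ^ (-(m : ℝ)))
      ≤ t ^ (-2 / α - 1) * (m * (t * z)) :=
    mul_le_mul_of_nonneg_left hbern htp.le
  have hrw : t ^ (-2 / α - 1) * (m * (t * z)) = m * z * t ^ (-2 / α) := by
    have : t ^ (-2 / α) = t ^ (-2 / α - 1) * t := by
      rw [← Real.rpow_add_one ht0.ne']; ring_nf
    rw [this]; ring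
  rw [hrw] at hmono
  calc t ^ (-2 / α - 1) * (1 - (1 + t * z) ^ (-(m : ℝ))) ≤ m * z * t ^ (-2 / α) := hmono
    _ ≤ |m * z * t ^ (-2 / α)| := le_abs_self _

theorem twoF1_ge_one_and_monotone
    (m : ℕ) (hm : 1 ≤ m) (α z : ℝ) (hα : 2 < α) (hz : 0 ≤ z) :
    1 ≤ twoF1 m α z ∧
    (∀ m' : ℕ, m ≤ m' → twoF1 m α z ≤ twoF1 m' α z) ∧
    (∀ z' : ℝ, z ≤ z' → twoF1 m α z ≤ twoF1 m α z') := by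
  have hα0 : (0:ℝ) < α := by linarith
  have hc : (-2 / α : ℝ) ≤ 0 := by
    apply div_nonpos_of_nonpos_of_nonneg <;> linarith
  -- pointwise nonpositivity of the integrand, generic in m, z
  have hptwise : ∀ (k : ℕ) (w : ℝ), 0 ≤ w → ∀ t ∈ Set.Ioc (0:ℝ) 1,
      t ^ (-2 / α - 1) * ((1 + t * w) ^ (-(k : ℝ)) - 1) ≤ 0 := by
    intro k w hw t ht
    have ht0 : 0 < t := ht.1
    have h1 : (1:ℝ) ≤ 1 + t * w := by nlinarith [mul_nonneg ht0.le hw]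
    have hr1 : (1 + t * w) ^ (-(k : ℝ)) ≤ 1 :=
      Real.rpow_le_one_of_one_le_of_nonpos h1 (by simp [Nat.cast_nonneg])
    have htp : 0 < t ^ (-2 / α - 1) := Real.rpow_pos_of_pos ht0 _
    exact mul_nonpos_of_nonneg_of_nonpos htp.le (by linarith)
  refine ⟨?_, ?_, ?_⟩
  · -- 1 ≤ twoF1
    have hI : (∫ t in Set.Ioc (0:ℝ) 1,
        t ^ (-2 / α - 1) * ((1 + t * z) ^ (-(m : ℝ)) - 1)) ≤ 0 :=
      setIntegral_nonpos measurableSet_Ioc (hptwise m z hz)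
    have h := mul_nonneg (neg_nonneg.2 hc) (neg_nonneg.2 hI)
    rw [neg_mul_neg] at h
    unfold twoF1; linarith
  · -- monotone in m
    intro m' hmm'
    have hmono : ∀ t ∈ Set.Ioc (0:ℝ) 1,
        t ^ (-2 / α - 1) * ((1 + t * z) ^ (-(m' : ℝ)) - 1)
          ≤ t ^ (-2 / α - 1) * ((1 + t * z) ^ (-(m : ℝ)) - 1) := by
      intro t ht
      have ht0 : 0 < t := ht.1
      have h1 : (1:ℝ) ≤ 1 + t * z := by nlinarith [mul_nonneg ht0.le hz]
      have htp : 0 < t ^ (-2 / α - 1) := Real.rpow_pos_of_pos ht0 _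
      have hexp : (-(m' : ℝ)) ≤ -(m : ℝ) := by
        simp only [neg_le_neg_iff, Nat.cast_le]; exact hmm'
      have := Real.rpow_le_rpow_of_exponent_le h1 hexp
      apply mul_le_mul_of_nonneg_left _ htp.le
      linarith
    have hI : (∫ t in Set.Ioc (0:ℝ) 1,
          t ^ (-2 / α - 1) * ((1 + t * z) ^ (-(m' : ℝ)) - 1))
        ≤ ∫ t in Set.Ioc (0:ℝ) 1,
          t ^ (-2 / α - 1) * ((1 + t * z) ^ (-(m : ℝ)) - 1) :=
      setIntegral_mono_on (twoF1_integrable m' α z hα hz)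
        (twoF1_integrable m α z hα hz) measurableSet_Ioc hmono
    unfold twoF1
    have := mul_le_mul_of_nonpos_left hI hc
    linarith
  · -- monotone in z
    intro z' hzz'
    have hz' : 0 ≤ z' := le_trans hz hzz'
    have hmono : ∀ t ∈ Set.Ioc (0:ℝ) 1,
        t ^ (-2 / α - 1) * ((1 + t * z') ^ (-(m : ℝ)) - 1)
          ≤ t ^ (-2 / α - 1) * ((1 + t * z) ^ (-(m : ℝ)) - 1) := by
      intro t ht
      have ht0 : 0 < t := ht.1
      have h1 : (0:ℝ) < 1 + t * z := by nlinarith [mul_nonneg ht0.le hz]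
      have hbase : 1 + t * z ≤ 1 + t * z' := by nlinarith
      have htp : 0 < t ^ (-2 / α - 1) := Real.rpow_pos_of_pos ht0 _
      have := Real.rpow_le_rpow_of_nonpos h1 hbase
        (by simp [Nat.cast_nonneg] : (-(m : ℝ)) ≤ 0)
      apply mul_le_mul_of_nonneg_left _ htp.le
      linarith
    have hI : (∫ t in Set.Ioc (0:ℝ) 1,
          t ^ (-2 / α - 1) * ((1 + t * z') ^ (-(m : ℝ)) - 1))
        ≤ ∫ t in Set.Ioc (0:ℝ) 1,
          t ^ (-2 / α - 1) * ((1 + t * z) ^ (-(m : ℝ)) - 1) :=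
      setIntegral_mono_on (twoF1_integrable m α z' hα hz')
        (twoF1_integrable m α z hα hz) measurableSet_Ioc hmono
    unfold twoF1
    have := mul_le_mul_of_nonpos_left hI hc
    linarith
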